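/- Suppose V : ℤ → ℝ is a Gordon potential. Then the Schrödinger operator H on ℓ²(ℤ) given by [Hψ](n) = ψ(n+1) + ψ(n−1) + V(n)ψ(n) has empty point spectrum, i.e., there is no E ∈ ℝ and no nonzero ψ ∈ ℓ²(ℤ) with Hψ = Eψ. -/

import Mathlib

/-!
An eigenfunction solves `x (m + 1) = (E - V m) * x m - x (m - 1)`, so the pairs
`(x (m + 1), x m)` are propagated by unimodular transfer matrices. Let `M` be the transfer matrix
over `[1, q]`. The Gordon condition puts the transfer matrices over `[q + 1, 2q]` and
`[-q + 1, 0]` within `q k^(-q) C^q` of `M`, and `k^(-q)` beats the exponential `C^q`.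
Cayley–Hamilton, `M² - (tr M) M + 1 = 0`, then bounds the pair at `0` by the pairs at `q, 2q`
(if `|tr M| ≤ 1`) or at `-q, q` (if `|tr M| ≥ 1`), up to that error. For an `ℓ²` eigenfunction
these pairs tend to `0` as `k → ∞`, so the pair at `0` vanishes, and with it the solution.
-/

open Filter

/-- A bounded function `V : ℤ → ℝ` is a Gordon potential if there are positive
integers `q k → ∞` such that `max_{1 ≤ n ≤ q k} |V(n) - V(n ± q k)| ≤ k^(-q k)`
for every `k ≥ 1`. -/
def IsGordonPotential (V : ℤ → ℝ) : Prop :=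
  (∃ C : ℝ, ∀ n : ℤ, |V n| ≤ C) ∧
  ∃ q : ℕ → ℕ, (∀ k, 1 ≤ q k) ∧ Tendsto q atTop atTop ∧
    ∀ k : ℕ, 1 ≤ k → ∀ n : ℤ, 1 ≤ n → n ≤ (q k : ℤ) →
      |V n - V (n + (q k : ℤ))| ≤ (k : ℝ) ^ (-(q k : ℤ)) ∧
      |V n - V (n - (q k : ℤ))| ≤ (k : ℝ) ^ (-(q k : ℤ))

open Matrix Topology

attribute [local instance] Matrix.linftyOpSeminormedAddCommGroup Matrix.linftyOpNormedRing

theorem Matrix.linfty_opNorm_le_of_sum_le {m n α : Type*} [Fintype m] [Fintype n]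
    [SeminormedAddCommGroup α] {A : Matrix m n α} {r : ℝ} (hr : 0 ≤ r)
    (h : ∀ i, ∑ j, ‖A i j‖ ≤ r) : ‖A‖ ≤ r := by
  lift r to NNReal using hr
  rw [linfty_opNorm_def, NNReal.coe_le_coe]
  exact Finset.sup_le fun i _ => by rw [← NNReal.coe_le_coe]; push_cast; exact h i

section TwoByTwo

variable {𝕜 : Type*} [NormedField 𝕜] {M : Matrix (Fin 2) (Fin 2) 𝕜}

theorem Matrix.mul_self_eq_trace_smul_sub_det_smul (M : Matrix (Fin 2) (Fin 2) 𝕜) :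
    M * M = M.trace • M - M.det • 1 := by
  have h := M.aeval_self_charpoly
  rw [charpoly_fin_two] at h
  simp only [map_add, map_sub, Polynomial.aeval_X, map_mul, Polynomial.aeval_C,
    Algebra.algebraMap_eq_smul_one, smul_mul_assoc, one_mul, sq] at h
  rw [← sub_eq_zero, ← h]
  abel

theorem Matrix.norm_le_of_norm_trace_le_one (hdet : M.det = 1) (htr : ‖M.trace‖ ≤ 1)
    (v : Fin 2 → 𝕜) : ‖v‖ ≤ ‖M *ᵥ v‖ + ‖(M * M) *ᵥ v‖ := by
  have hv : v = M.trace • (M *ᵥ v) - (M * M) *ᵥ v := by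
    rw [M.mul_self_eq_trace_smul_sub_det_smul, hdet, one_smul, sub_mulVec, smul_mulVec,
      one_mulVec, sub_sub_cancel]
  calc ‖v‖ ≤ ‖M.trace‖ * ‖M *ᵥ v‖ + ‖(M * M) *ᵥ v‖ := by
        conv_lhs => rw [hv]
        exact (norm_sub_le _ _).trans_eq (by rw [norm_smul])
    _ ≤ ‖M *ᵥ v‖ + ‖(M * M) *ᵥ v‖ := by
        gcongr
        exact mul_le_of_le_one_left (norm_nonneg _) htr

theorem Matrix.norm_mulVec_le_of_one_le_norm_trace (hdet : M.det = 1) (htr : 1 ≤ ‖M.trace‖)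
    (v : Fin 2 → 𝕜) : ‖M *ᵥ v‖ ≤ ‖v‖ + ‖(M * M) *ᵥ v‖ := by
  have hv : M.trace • (M *ᵥ v) = (M * M) *ᵥ v + v := by
    rw [M.mul_self_eq_trace_smul_sub_det_smul, hdet, one_smul, sub_mulVec, smul_mulVec,
      one_mulVec, sub_add_cancel]
  calc ‖M *ᵥ v‖ ≤ ‖M.trace‖ * ‖M *ᵥ v‖ := le_mul_of_one_le_left (norm_nonneg _) htr
    _ = ‖(M * M) *ᵥ v + v‖ := by rw [← norm_smul, hv]
    _ ≤ ‖v‖ + ‖(M * M) *ᵥ v‖ := (norm_add_le _ _).trans_eq (add_comm _ _)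

theorem Matrix.norm_le_of_det_eq_one_of_norm_sub_le (hdet : M.det = 1)
    {P N : Matrix (Fin 2) (Fin 2) 𝕜} {δ : ℝ} (hP : ‖P - M‖ ≤ δ) (hN : ‖N - M‖ ≤ δ)
    {v₀ v₁ v₂ v₃ : Fin 2 → 𝕜} (hv₁ : v₁ = P *ᵥ v₀) (hv₂ : v₂ = M *ᵥ v₁) (hv₃ : v₃ = N *ᵥ v₂) :
    ‖v₁‖ ≤ ‖v₀‖ + ‖v₂‖ + ‖v₃‖ + δ * (1 + ‖M‖) * (‖v₀‖ + ‖v₂‖) := by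
  have hδ : 0 ≤ δ := (norm_nonneg _).trans hN
  have errP : ‖M *ᵥ v₀ - v₁‖ ≤ δ * ‖v₀‖ := by
    rw [hv₁, ← sub_mulVec]
    refine (linfty_opNorm_mulVec _ _).trans ?_
    rw [norm_sub_rev]
    gcongr
  have errN : ‖(M * M) *ᵥ v₁ - v₃‖ ≤ δ * ‖v₂‖ := by
    rw [← mulVec_mulVec, ← hv₂, hv₃, ← sub_mulVec]
    refine (linfty_opNorm_mulVec _ _).trans ?_
    rw [norm_sub_rev]
    gcongr
  have hδM : 0 ≤ δ * ‖M‖ := mul_nonneg hδ (norm_nonneg M)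
  have := norm_nonneg v₀
  have := norm_nonneg v₃
  have := mul_nonneg hδ (norm_nonneg v₀)
  have := mul_nonneg hδ (norm_nonneg v₂)
  have := mul_nonneg hδM (norm_nonneg v₀)
  have := mul_nonneg hδM (norm_nonneg v₂)
  rcases le_total ‖M.trace‖ 1 with htr | htr
  · have h := norm_le_of_norm_trace_le_one hdet htr v₁
    rw [← hv₂] at h
    have := norm_le_norm_add_norm_sub' ((M * M) *ᵥ v₁) v₃
    linarith
  · have h := norm_mulVec_le_of_one_le_norm_trace hdet htr v₀
    have hMv₀ := norm_le_norm_add_norm_sub' v₁ (M *ᵥ v₀)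
    rw [norm_sub_rev] at hMv₀
    have hMMv₀ : ‖(M * M) *ᵥ v₀‖ ≤ ‖v₂‖ + ‖M‖ * (δ * ‖v₀‖) := by
      have hsplit : (M * M) *ᵥ v₀ = v₂ + M *ᵥ (M *ᵥ v₀ - v₁) := by
        rw [mulVec_sub, hv₂, mulVec_mulVec, add_sub_cancel]
      rw [hsplit]
      refine (norm_add_le _ _).trans (add_le_add_right ?_ _)
      exact (linfty_opNorm_mulVec _ _).trans (by gcongr)
    linarith

end TwoByTwo

section Transfer

def transferStep (t : ℝ) : Matrix (Fin 2) (Fin 2) ℝ := !![t, -1; 1, 0]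

def transfer (b : ℤ → ℝ) (s : ℤ) : ℕ → Matrix (Fin 2) (Fin 2) ℝ
  | 0 => 1
  | n + 1 => transferStep (b (s + n + 1)) * transfer b s n

theorem transferStep_mulVec (t y z : ℝ) : transferStep t *ᵥ ![y, z] = ![t * y - z, y] := by
  ext i
  fin_cases i <;> simp [transferStep, sub_eq_add_neg, mul_comm]

theorem det_transferStep (t : ℝ) : (transferStep t).det = 1 := by
  simp [transferStep, det_fin_two]

theorem det_transfer (b : ℤ → ℝ) (s : ℤ) (n : ℕ) : (transfer b s n).det = 1 := by
  induction n with
  | zero => simp [transfer]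
  | succ n ih => rw [transfer, det_mul, det_transferStep, ih, one_mul]

theorem norm_transferStep_le (t : ℝ) : ‖transferStep t‖ ≤ |t| + 1 := by
  refine linfty_opNorm_le_of_sum_le (by positivity) fun i => ?_
  fin_cases i <;> simp [transferStep, Fin.sum_univ_two]

theorem norm_transferStep_sub_le (s t : ℝ) : ‖transferStep s - transferStep t‖ ≤ |s - t| := by
  refine linfty_opNorm_le_of_sum_le (abs_nonneg _) fun i => ?_
  fin_cases i <;> simp [transferStep, Fin.sum_univ_two]

variable {b : ℤ → ℝ} {R : ℝ}

theorem norm_transfer_le (hb : ∀ j, |b j| ≤ R) (s : ℤ) (n : ℕ) :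
    ‖transfer b s n‖ ≤ (R + 1) ^ n := by
  induction n with
  | zero => simp [transfer]
  | succ n ih =>
    rw [transfer, pow_succ']
    have hstep : ‖transferStep (b (s + n + 1))‖ ≤ R + 1 :=
      (norm_transferStep_le _).trans (by linarith [hb (s + n + 1)])
    exact (norm_mul_le _ _).trans
      (mul_le_mul hstep ih (norm_nonneg _) ((norm_nonneg _).trans hstep))

theorem norm_transfer_sub_le (hb : ∀ j, |b j| ≤ R) {s t : ℤ} {n : ℕ} {δ : ℝ}
    (hst : ∀ j : ℤ, 1 ≤ j → j ≤ n → |b (s + j) - b (t + j)| ≤ δ) :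
    ‖transfer b s n - transfer b t n‖ ≤ n * δ * (R + 1) ^ n := by
  have hR : 0 ≤ R := (abs_nonneg _).trans (hb 0)
  induction n with
  | zero => simp [transfer]
  | succ n ih =>
    have hδ : 0 ≤ δ := (abs_nonneg _).trans (hst 1 le_rfl (by omega))
    have hlast : |b (s + n + 1) - b (t + n + 1)| ≤ δ := by
      simpa [add_assoc] using hst (n + 1) (by omega) (by push_cast; rfl)
    have ih' := ih fun j h₁ h₂ => hst j h₁ (by push_cast; omega)
    have hsplit : transfer b s (n + 1) - transfer b t (n + 1) =
        transferStep (b (s + n + 1)) * (transfer b s n - transfer b t n) +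
          (transferStep (b (s + n + 1)) - transferStep (b (t + n + 1))) * transfer b t n := by
      simp only [transfer]
      noncomm_ring
    have hA : ‖transferStep (b (s + n + 1))‖ ≤ R + 1 :=
      (norm_transferStep_le _).trans (by linarith [hb (s + n + 1)])
    have hT := norm_transfer_le hb t n
    have hpow : (R + 1) ^ n ≤ (R + 1) * (R + 1) ^ n :=
      le_mul_of_one_le_left (by positivity) (by linarith)
    calc ‖transfer b s (n + 1) - transfer b t (n + 1)‖
        ≤ (R + 1) * (n * δ * (R + 1) ^ n) + δ * (R + 1) ^ n := by
          rw [hsplit]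
          refine (norm_add_le _ _).trans (add_le_add ?_ ?_) <;> refine (norm_mul_le _ _).trans ?_
          · gcongr
          · gcongr
            exact (norm_transferStep_sub_le _ _).trans hlast
      _ ≤ (n + 1 : ℕ) * δ * (R + 1) ^ (n + 1) := by
          rw [pow_succ']
          push_cast
          nlinarith [mul_le_mul_of_nonneg_left hpow hδ]

end Transfer

section Solutions

variable {b : ℤ → ℝ} {x : ℤ → ℝ}

def consecutivePair (x : ℤ → ℝ) (m : ℤ) : Fin 2 → ℝ := ![x (m + 1), x m]

theorem consecutivePair_add (hx : ∀ m, x (m + 1) = b m * x m - x (m - 1)) (s : ℤ) (n : ℕ) :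
    consecutivePair x (s + n) = transfer b s n *ᵥ consecutivePair x s := by
  induction n with
  | zero => simp [transfer]
  | succ n ih =>
    rw [transfer, ← mulVec_mulVec, ← ih, consecutivePair, consecutivePair, transferStep_mulVec,
      Nat.cast_succ, ← add_assoc, hx (s + n + 1), add_sub_cancel_right]

theorem eq_zero_of_consecutivePair_eq_zero (hx : ∀ m, x (m + 1) = b m * x m - x (m - 1))
    (h₀ : consecutivePair x 0 = 0) : x = 0 := by
  have h : ∀ m, x m = 0 ∧ x (m + 1) = 0 := by
    intro m
    induction m using Int.induction_on with
    | zero => simpa [consecutivePair, and_comm] using h₀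
    | succ m ih => exact ⟨ih.2, by rw [hx, ih.2, add_sub_cancel_right, ih.1]; ring⟩
    | pred m ih =>
      refine ⟨?_, by rw [sub_add_cancel]; exact ih.1⟩
      have h := hx (-m)
      rw [ih.1, ih.2] at h
      linarith
  exact funext fun m => (h m).1

theorem tendsto_consecutivePair_cofinite (hx : Tendsto x cofinite (𝓝 0)) :
    Tendsto (consecutivePair x) cofinite (𝓝 0) := by
  rw [tendsto_pi_nhds]
  intro i
  fin_cases i
  · exact hx.comp (add_left_injective 1).tendsto_cofinite
  · exact hx

theorem norm_consecutivePair_zero_le {R : ℝ} (hb : ∀ j, |b j| ≤ R)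
    (hx : ∀ m, x (m + 1) = b m * x m - x (m - 1)) (n : ℕ) {δ : ℝ}
    (hδ : ∀ j : ℤ, 1 ≤ j → j ≤ n → |b (n + j) - b j| ≤ δ ∧ |b (-n + j) - b j| ≤ δ) :
    ‖consecutivePair x 0‖ ≤ ‖consecutivePair x (-n)‖ + ‖consecutivePair x n‖ +
      ‖consecutivePair x (n + n)‖ +
        2 * (n * δ * ((R + 1) ^ 2) ^ n) * (‖consecutivePair x (-n)‖ + ‖consecutivePair x n‖) := by
  set M := transfer b 0 n
  have hnear : ∀ s : ℤ, (∀ j : ℤ, 1 ≤ j → j ≤ n → |b (s + j) - b j| ≤ δ) →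
      ‖transfer b s n - M‖ ≤ n * δ * (R + 1) ^ n :=
    fun s hs => norm_transfer_sub_le hb fun j h₁ h₂ => by simpa using hs j h₁ h₂
  have h := norm_le_of_det_eq_one_of_norm_sub_le (det_transfer b 0 n)
    (hnear (-n) fun j h₁ h₂ => (hδ j h₁ h₂).2) (hnear n fun j h₁ h₂ => (hδ j h₁ h₂).1)
    (by simpa using consecutivePair_add hx (-n) n) (by simpa using consecutivePair_add hx 0 n)
    (consecutivePair_add hx n n)
  have hR : 1 ≤ R + 1 := by linarith [hb 0, abs_nonneg (b 0)]
  have hM : 1 + ‖M‖ ≤ 2 * (R + 1) ^ n := by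
    linarith [norm_transfer_le hb 0 n, one_le_pow₀ hR (n := n)]
  have hδ₀ : 0 ≤ n * δ * (R + 1) ^ n :=
    (norm_nonneg _).trans (hnear n fun j h₁ h₂ => (hδ j h₁ h₂).1)
  refine h.trans (add_le_add_right (mul_le_mul_of_nonneg_right ?_ (by positivity)) _)
  calc n * δ * (R + 1) ^ n * (1 + ‖M‖) ≤ n * δ * (R + 1) ^ n * (2 * (R + 1) ^ n) := by gcongr
    _ = 2 * (n * δ * ((R + 1) ^ 2) ^ n) := by rw [← pow_mul, pow_mul']; ring

end Solutions

theorem tendsto_natCast_mul_zpow_neg_mul_pow {q : ℕ → ℕ} (hq : Tendsto q atTop atTop) (A : ℝ) :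
    Tendsto (fun k : ℕ => (q k : ℝ) * (k : ℝ) ^ (-(q k : ℤ)) * A ^ q k) atTop (𝓝 0) := by
  have hrw : ∀ k : ℕ, (q k : ℝ) * (k : ℝ) ^ (-(q k : ℤ)) * A ^ q k = q k * (A / k) ^ q k := by
    intro k
    rw [_root_.zpow_neg, zpow_natCast, div_pow, mul_assoc, inv_mul_eq_div]
  simp_rw [hrw]
  refine squeeze_zero_norm' ?_
    ((tendsto_self_mul_const_pow_of_lt_one (r := 1 / 2) (by norm_num) (by norm_num)).comp hq)
  filter_upwards [eventually_ge_atTop ⌈2 * |A|⌉₊, eventually_gt_atTop 0] with k hk hk₀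
  rw [norm_mul, norm_pow, Real.norm_natCast, Function.comp_apply]
  gcongr
  rw [norm_div, Real.norm_natCast, div_le_iff₀ (by positivity), Real.norm_eq_abs]
  linarith [Nat.ceil_le.mp hk]

theorem lp.tendsto_norm_cofinite_zero {ι : Type*} {E : ι → Type*} [∀ i, NormedAddCommGroup (E i)]
    {p : ENNReal} (hp : 0 < p.toReal) (f : lp E p) :
    Tendsto (fun i => ‖f i‖) cofinite (𝓝 0) := by
  have h := ((lp.memℓp f).summable hp).tendsto_cofinite_zero.rpow_const
    (p := p.toReal⁻¹) (Or.inr (inv_nonneg.mpr hp.le))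
  rw [Real.zero_rpow (inv_ne_zero hp.ne')] at h
  refine h.congr fun i => ?_
  rw [← Real.rpow_mul (norm_nonneg _), mul_inv_cancel₀ hp.ne', Real.rpow_one]

theorem IsGordonPotential.eq_zero_of_tendsto {V : ℤ → ℝ} (hV : IsGordonPotential V) {E : ℝ}
    {x : ℤ → ℝ} (hx : ∀ m, x (m + 1) = (E - V m) * x m - x (m - 1))
    (hdecay : Tendsto x cofinite (𝓝 0)) : x = 0 := by
  obtain ⟨⟨C, hC⟩, q, -, hq, hgordon⟩ := hV
  have hb : ∀ j, |E - V j| ≤ |E| + C := fun j => (abs_sub _ _).trans (by linarith [hC j])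
  have hP : Tendsto (fun m => ‖consecutivePair x m‖) cofinite (𝓝 0) := by
    simpa using (tendsto_consecutivePair_cofinite hdecay).norm
  have hqZ : Tendsto (fun k => (q k : ℤ)) atTop atTop := tendsto_natCast_atTop_atTop.comp hq
  have hPneg := hP.comp ((tendsto_neg_atTop_atBot.comp hqZ).mono_right
    (Int.cofinite_eq ▸ le_sup_left))
  have hPq := hP.comp (hqZ.mono_right (Int.cofinite_eq ▸ le_sup_right))
  have hP2q := hP.comp ((hqZ.atTop_add_atTop hqZ).mono_right (Int.cofinite_eq ▸ le_sup_right))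
  have hF := ((hPneg.add hPq).add hP2q).add (((tendsto_natCast_mul_zpow_neg_mul_pow hq
    ((|E| + C + 1) ^ 2)).const_mul 2).mul (hPneg.add hPq))
  simp only [add_zero, mul_zero] at hF
  have hbound : ∀ᶠ k in atTop, ‖consecutivePair x 0‖ ≤ _ := eventually_atTop.2 ⟨1, fun k hk =>
    norm_consecutivePair_zero_le hb hx (q k) fun j h₁ h₂ => by
      obtain ⟨hplus, hminus⟩ := hgordon k hk j h₁ h₂
      rw [sub_sub_sub_cancel_left, sub_sub_sub_cancel_left, add_comm _ j, neg_add_eq_sub]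
      exact ⟨hplus, hminus⟩⟩
  exact eq_zero_of_consecutivePair_eq_zero hx (norm_le_zero_iff.mp (ge_of_tendsto hF hbound))

theorem statement4
    (V : ℤ → ℝ) (hV : IsGordonPotential V)
    (H : lp (fun _ : ℤ => ℝ) 2 →L[ℝ] lp (fun _ : ℤ => ℝ) 2)
    (hH : ∀ ψ : lp (fun _ : ℤ => ℝ) 2, ∀ n : ℤ,
        H ψ n = ψ (n + 1) + ψ (n - 1) + V n * ψ n) :
    ¬ ∃ (E : ℝ) (ψ : lp (fun _ : ℤ => ℝ) 2), ψ ≠ 0 ∧ H ψ = E • ψ := by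
  rintro ⟨E, ψ, hψ, hHψ⟩
  have hx : ∀ m, ψ (m + 1) = (E - V m) * ψ m - ψ (m - 1) := fun m => by
    have h := hH ψ m
    rw [hHψ, lp.coeFn_smul, Pi.smul_apply, smul_eq_mul] at h
    linarith
  have hdecay : Tendsto (fun m => ψ m) cofinite (𝓝 0) :=
    tendsto_zero_iff_norm_tendsto_zero.mpr (lp.tendsto_norm_cofinite_zero (by norm_num) ψ)
  exact hψ (lp.ext ((hV.eq_zero_of_tendsto hx hdecay).trans (lp.coeFn_zero _ _).symm))
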